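/- For all p ∈ (1/2, 1), the inequality Φ⁻¹(p) > √(π/2)·(2p − 1) holds, where Φ⁻¹ is the inverse of the standard Gaussian CDF. Moreover, equality of the derivatives holds at p = 1/2 and both sides vanish at p = 1/2. -/

import Mathlib

open MeasureTheory ProbabilityTheory

/-- The isotropic Gaussian measure `N(0, σ²I)` on `ℝⁿ` (as `EuclideanSpace`). -/
noncomputable def gaussMeasure (n : ℕ) (σ : ℝ) : Measure (EuclideanSpace ℝ (Fin n)) :=
  (Measure.pi fun _ : Fin n => gaussianReal 0 (σ ^ 2).toNNReal).map
    (EuclideanSpace.equiv (Fin n) ℝ).symm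

/-- The standard Gaussian cumulative distribution function `Φ`. -/
noncomputable def stdGaussCDF : ℝ → ℝ := fun t => cdf (gaussianReal 0 1) t

/-- The inverse `Φ⁻¹` of the standard Gaussian CDF. -/
noncomputable def stdGaussCDFInv : ℝ → ℝ := Function.invFun stdGaussCDF

/-!
`Φ` has derivative the Gaussian density `φ`, which is strictly maximal at `0` with
`φ 0 = 1 / √(2π)`. By the mean value theorem `Φ x - 1/2 < x / √(2π)` for `x > 0`; applied at
`x = Φ⁻¹ p` this is the inequality. The derivative of `Φ⁻¹` at `1/2` is `1 / φ 0 = √(2π)` by the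
inverse function theorem, which applies because `Φ⁻¹` is monotone on `(0, 1)` with image all of `ℝ`,
hence continuous there.
-/

open Set Filter Topology Real
open scoped NNReal

lemma continuous_gaussianPDFReal (μ : ℝ) (v : ℝ≥0) : Continuous (gaussianPDFReal μ v) := by
  rw [gaussianPDFReal_def]
  fun_prop

lemma gaussianPDFReal_self (μ : ℝ) (v : ℝ≥0) : gaussianPDFReal μ v μ = (√(2 * π * v))⁻¹ := by
  simp [gaussianPDFReal]

lemma gaussianPDFReal_lt_gaussianPDFReal_self (μ : ℝ) {v : ℝ≥0} (hv : v ≠ 0) {x : ℝ}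
    (hx : x ≠ μ) : gaussianPDFReal μ v x < gaussianPDFReal μ v μ := by
  have hpos : 0 < (√(2 * π * v))⁻¹ := by positivity
  rw [gaussianPDFReal_self, gaussianPDFReal_def]
  refine mul_lt_of_lt_one_right hpos (exp_lt_one_iff.2 (div_neg_of_neg_of_pos ?_ (by positivity)))
  have : 0 < (x - μ) ^ 2 := by positivity [sub_ne_zero.2 hx]
  linarith

lemma gaussianPDFReal_zero_neg (v : ℝ≥0) (x : ℝ) :
    gaussianPDFReal 0 v (-x) = gaussianPDFReal 0 v x := by
  simp [gaussianPDFReal]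

lemma cdf_gaussianReal_eq_integral (μ : ℝ) {v : ℝ≥0} (hv : v ≠ 0) (x : ℝ) :
    cdf (gaussianReal μ v) x = ∫ t in Iic x, gaussianPDFReal μ v t := by
  rw [cdf_eq_real, measureReal_def, gaussianReal_apply_eq_integral μ hv,
    ENNReal.toReal_ofReal (integral_nonneg fun t => gaussianPDFReal_nonneg μ v t)]

lemma hasDerivAt_cdf_gaussianReal (μ : ℝ) {v : ℝ≥0} (hv : v ≠ 0) (x : ℝ) :
    HasDerivAt (cdf (gaussianReal μ v)) (gaussianPDFReal μ v x) x := by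
  have hint := integrable_gaussianPDFReal μ v
  have hsplit : cdf (gaussianReal μ v) = fun y =>
      (∫ t in Iic 0, gaussianPDFReal μ v t) + ∫ t in 0..y, gaussianPDFReal μ v t := by
    ext y
    rw [cdf_gaussianReal_eq_integral μ hv,
      ← intervalIntegral.integral_Iic_sub_Iic hint.integrableOn hint.integrableOn]
    ring
  rw [hsplit]
  exact ((continuous_gaussianPDFReal μ v).integral_hasStrictDerivAt 0 x).hasDerivAt.const_add _

lemma cdf_gaussianReal_zero_zero {v : ℝ≥0} (hv : v ≠ 0) : cdf (gaussianReal 0 v) 0 = 1 / 2 := by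
  have hint := integrable_gaussianPDFReal 0 v
  have hsymm : ∫ t in Iic 0, gaussianPDFReal 0 v t = ∫ t in Ioi 0, gaussianPDFReal 0 v t := by
    simpa [gaussianPDFReal_zero_neg] using integral_comp_neg_Iic 0 (gaussianPDFReal 0 v)
  have htotal := intervalIntegral.integral_Iic_add_Ioi (b := 0) hint.integrableOn hint.integrableOn
  rw [integral_gaussianPDFReal_eq_one 0 hv, ← hsymm] at htotal
  rw [cdf_gaussianReal_eq_integral 0 hv]
  linarith

lemma exists_cdf_eq {μ : Measure ℝ} [IsProbabilityMeasure μ] (hμ : Continuous (cdf μ)) {p : ℝ}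
    (hp : p ∈ Ioo 0 1) : ∃ x, cdf μ x = p :=
  mem_range_of_exists_le_of_exists_ge hμ ((tendsto_cdf_atBot μ).eventually_le_const hp.1).exists
    ((tendsto_cdf_atTop μ).eventually_const_le hp.2).exists

lemma hasDerivAt_stdGaussCDF (x : ℝ) : HasDerivAt stdGaussCDF (gaussianPDFReal 0 1 x) x :=
  hasDerivAt_cdf_gaussianReal 0 one_ne_zero x

lemma continuous_stdGaussCDF : Continuous stdGaussCDF :=
  continuous_iff_continuousAt.2 fun x => (hasDerivAt_stdGaussCDF x).continuousAt

lemma strictMono_stdGaussCDF : StrictMono stdGaussCDF :=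
  strictMono_of_deriv_pos fun x => by
    rw [(hasDerivAt_stdGaussCDF x).deriv]
    exact gaussianPDFReal_pos 0 1 x one_ne_zero

lemma stdGaussCDF_zero : stdGaussCDF 0 = 1 / 2 :=
  cdf_gaussianReal_zero_zero one_ne_zero

lemma stdGaussCDF_mem_Ioo (x : ℝ) : stdGaussCDF x ∈ Ioo 0 1 :=
  ⟨(cdf_nonneg _ (x - 1)).trans_lt (strictMono_stdGaussCDF (sub_one_lt x)),
    (strictMono_stdGaussCDF (lt_add_one x)).trans_le (cdf_le_one _ (x + 1))⟩

lemma stdGaussCDFInv_stdGaussCDF (x : ℝ) : stdGaussCDFInv (stdGaussCDF x) = x :=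
  Function.leftInverse_invFun strictMono_stdGaussCDF.injective x

lemma stdGaussCDF_stdGaussCDFInv {p : ℝ} (hp : p ∈ Ioo 0 1) :
    stdGaussCDF (stdGaussCDFInv p) = p :=
  Function.invFun_eq (exists_cdf_eq continuous_stdGaussCDF hp)

lemma stdGaussCDFInv_half : stdGaussCDFInv (1 / 2) = 0 := by
  rw [← stdGaussCDF_zero, stdGaussCDFInv_stdGaussCDF]

lemma strictMonoOn_stdGaussCDFInv : StrictMonoOn stdGaussCDFInv (Ioo 0 1) := fun p hp q hq hpq =>
  strictMono_stdGaussCDF.lt_iff_lt.1 <| by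
    rwa [stdGaussCDF_stdGaussCDFInv hp, stdGaussCDF_stdGaussCDFInv hq]

lemma continuousAt_stdGaussCDFInv {p : ℝ} (hp : p ∈ Ioo 0 1) : ContinuousAt stdGaussCDFInv p := by
  have himage : stdGaussCDFInv '' Ioo 0 1 = univ := eq_univ_of_forall fun x =>
    ⟨stdGaussCDF x, stdGaussCDF_mem_Ioo x, stdGaussCDFInv_stdGaussCDF x⟩
  exact strictMonoOn_stdGaussCDFInv.continuousAt_of_image_mem_nhds (isOpen_Ioo.mem_nhds hp)
    (himage ▸ univ_mem)

lemma hasDerivAt_stdGaussCDFInv {p : ℝ} (hp : p ∈ Ioo 0 1) :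
    HasDerivAt stdGaussCDFInv (gaussianPDFReal 0 1 (stdGaussCDFInv p))⁻¹ p :=
  (hasDerivAt_stdGaussCDF _).of_local_left_inverse (continuousAt_stdGaussCDFInv hp)
    (gaussianPDFReal_pos 0 1 _ one_ne_zero).ne'
    (eventually_of_mem (isOpen_Ioo.mem_nhds hp) fun _ => stdGaussCDF_stdGaussCDFInv)

lemma stdGaussCDF_sub_half_lt {x : ℝ} (hx : 0 < x) : stdGaussCDF x - 1 / 2 < x / √(2 * π) := by
  obtain ⟨c, hc, hslope⟩ := exists_hasDerivAt_eq_slope stdGaussCDF (gaussianPDFReal 0 1) hx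
    continuous_stdGaussCDF.continuousOn fun t _ => hasDerivAt_stdGaussCDF t
  have hmax := gaussianPDFReal_lt_gaussianPDFReal_self 0 one_ne_zero hc.1.ne'
  rw [hslope, stdGaussCDF_zero, sub_zero, div_lt_iff₀ hx, gaussianPDFReal_self] at hmax
  simpa [div_eq_inv_mul] using hmax

lemma sqrt_two_pi_mul_sub_half_lt_stdGaussCDFInv {p : ℝ} (hp : p ∈ Ioo (1 / 2) 1) :
    √(2 * π) * (p - 1 / 2) < stdGaussCDFInv p := by
  have hp' : p ∈ Ioo 0 1 := ⟨by linarith [hp.1], hp.2⟩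
  have hx : 0 < stdGaussCDFInv p := by
    rw [← strictMono_stdGaussCDF.lt_iff_lt, stdGaussCDF_zero, stdGaussCDF_stdGaussCDFInv hp']
    exact hp.1
  have h := stdGaussCDF_sub_half_lt hx
  rw [stdGaussCDF_stdGaussCDFInv hp', lt_div_iff₀ (by positivity)] at h
  linarith

lemma two_mul_sqrt_pi_div_two : 2 * √(π / 2) = √(2 * π) := by
  rw [show 2 * π = 2 ^ 2 * (π / 2) by ring, sqrt_mul (by positivity), sqrt_sq zero_le_two]

theorem phiInv_gt_linear :
    (∀ p ∈ Set.Ioo (1 / 2 : ℝ) 1,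
      Real.sqrt (Real.pi / 2) * (2 * p - 1) < stdGaussCDFInv p) ∧
    HasDerivAt stdGaussCDFInv (Real.sqrt (2 * Real.pi)) (1 / 2) ∧
    HasDerivAt (fun p : ℝ => Real.sqrt (Real.pi / 2) * (2 * p - 1))
      (Real.sqrt (2 * Real.pi)) (1 / 2) ∧
    stdGaussCDFInv (1 / 2) = 0 ∧
    Real.sqrt (Real.pi / 2) * (2 * (1 / 2 : ℝ) - 1) = 0 := by
  refine ⟨fun p hp => ?_, ?_, ?_, stdGaussCDFInv_half, by norm_num⟩
  · calc √(π / 2) * (2 * p - 1) = √(2 * π) * (p - 1 / 2) := by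
          rw [← two_mul_sqrt_pi_div_two]; ring
      _ < stdGaussCDFInv p := sqrt_two_pi_mul_sub_half_lt_stdGaussCDFInv hp
  · have hinv := hasDerivAt_stdGaussCDFInv (p := 1 / 2) (by norm_num)
    rwa [stdGaussCDFInv_half, gaussianPDFReal_self, inv_inv, NNReal.coe_one, mul_one] at hinv
  · have hline := (((hasDerivAt_id (1 / 2 : ℝ)).const_mul 2).sub_const 1).const_mul √(π / 2)
    rwa [mul_one, mul_comm, two_mul_sqrt_pi_div_two] at hline
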